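/- arXiv:2305.17585 — 9 statements merged into one kernel-verified Lean document; each statement's English description precedes it below -/
import Mathlib

section
/- For every complex t with |t| < 1, the family (j, n) ↦ 2^j (t^{(2n−1)·2^j} − t^{(2n)·2^j}), indexed over j ≥ 0, n ≥ 1, is summable with sum t/(1−t). -/
/-!
Put `x = t ^ 2 ^ j` and `g j = 2 ^ j * x / (1 - x)`. The row `j` of the family sums to
`2 ^ j * x / (1 + x)`, and `x / (1 + x) = x / (1 - x) - 2 * x ^ 2 / (1 - x ^ 2)` shows that this is
`g j - g (j + 1)`. Since `g j → 0`, the rows telescope to `g 0 = t / (1 - t)`. Regrouping by rows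
is legitimate because the family is dominated by `2 * (2 ^ j * ‖t‖ ^ 2 ^ j) * ‖t‖ ^ m`.
-/

open Filter Topology

lemma hasSum_sub_succ_of_tendsto {E : Type*} [AddCommGroup E] [TopologicalSpace E]
    [IsTopologicalAddGroup E] [T2Space E] {g : ℕ → E} {l : E}
    (hs : Summable fun n ↦ g n - g (n + 1)) (hg : Tendsto g atTop (𝓝 l)) :
    HasSum (fun n ↦ g n - g (n + 1)) (g 0 - l) := by
  rw [hs.hasSum_iff_tendsto_nat]
  simpa only [Finset.sum_range_sub'] using tendsto_const_nhds.sub hg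

section NormedField

variable {K : Type*} [NormedField K] {x : K}

lemma one_sub_ne_zero_of_norm_lt_one (hx : ‖x‖ < 1) : 1 - x ≠ 0 := by
  rintro h; simp [← sub_eq_zero.1 h] at hx

lemma one_add_ne_zero_of_norm_lt_one (hx : ‖x‖ < 1) : 1 + x ≠ 0 := by
  rintro h; simp [eq_neg_of_add_eq_zero_right h] at hx

lemma div_one_add_eq_div_one_sub_sub (hx : ‖x‖ < 1) :
    x / (1 + x) = x / (1 - x) - 2 * (x ^ 2 / (1 - x ^ 2)) := by
  have h1 := one_sub_ne_zero_of_norm_lt_one hx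
  have h2 := one_add_ne_zero_of_norm_lt_one hx
  rw [show (1 : K) - x ^ 2 = (1 - x) * (1 + x) by ring]
  field_simp
  ring

lemma hasSum_pow_odd_sub_pow_even (hx : ‖x‖ < 1) :
    HasSum (fun m : ℕ ↦ x ^ (2 * m + 1) - x ^ (2 * m + 2)) (x / (1 + x)) := by
  have hx2 : ‖x ^ 2‖ < 1 := by
    rw [norm_pow]; exact pow_lt_one₀ (norm_nonneg x) hx two_ne_zero
  have h1 := one_sub_ne_zero_of_norm_lt_one hx
  have h2 := one_add_ne_zero_of_norm_lt_one hx
  have hsum : (x - x ^ 2) * (1 - x ^ 2)⁻¹ = x / (1 + x) := by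
    rw [show (1 : K) - x ^ 2 = (1 - x) * (1 + x) by ring]
    field_simp
  rw [← hsum]
  exact ((hasSum_geometric_of_norm_lt_one hx2).mul_left _).congr_fun fun m ↦ by ring

lemma norm_pow_odd_sub_pow_even_le (hx : ‖x‖ ≤ 1) (m : ℕ) :
    ‖x ^ (2 * m + 1) - x ^ (2 * m + 2)‖ ≤ 2 * ‖x‖ * ‖x‖ ^ m := by
  have hsub : ‖1 - x‖ ≤ 2 := (norm_sub_le 1 x).trans (by rw [norm_one]; linarith)
  calc _ = ‖x‖ * ‖x‖ ^ m * ‖x‖ ^ m * ‖1 - x‖ := by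
        rw [← norm_pow, ← norm_mul, ← norm_mul, ← norm_mul]; ring_nf
    _ ≤ ‖x‖ * ‖x‖ ^ m * 1 * 2 := by gcongr; exact pow_le_one₀ (norm_nonneg x) hx
    _ = 2 * ‖x‖ * ‖x‖ ^ m := by ring

end NormedField

lemma summable_two_pow_mul_pow_two_pow {r : ℝ} (h0 : 0 ≤ r) (h1 : r < 1) :
    Summable fun j : ℕ ↦ (2 : ℝ) ^ j * r ^ 2 ^ j := by
  have h : Summable fun n : ℕ ↦ (n : ℝ) ^ 1 * r ^ n :=
    summable_pow_mul_geometric_of_norm_lt_one 1 (by rwa [Real.norm_of_nonneg h0])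
  simpa [Function.comp_def] using h.comp_injective (Nat.pow_right_injective le_rfl)

section Dyadic

variable {t : ℂ}

lemma norm_pow_two_pow_le (ht : ‖t‖ ≤ 1) (j : ℕ) : ‖t ^ 2 ^ j‖ ≤ ‖t‖ := by
  rw [norm_pow]; exact pow_le_of_le_one (norm_nonneg t) ht (by positivity)

lemma two_pow_mul_div_one_add_pow_two_pow (ht : ‖t‖ < 1) (j : ℕ) :
    2 ^ j * (t ^ 2 ^ j / (1 + t ^ 2 ^ j)) = 2 ^ j * (t ^ 2 ^ j / (1 - t ^ 2 ^ j)) -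
      2 ^ (j + 1) * (t ^ 2 ^ (j + 1) / (1 - t ^ 2 ^ (j + 1))) := by
  rw [div_one_add_eq_div_one_sub_sub ((norm_pow_two_pow_le ht.le j).trans_lt ht),
    pow_succ (2 : ℕ) j, pow_mul]
  ring

lemma tendsto_two_pow_mul_pow_two_pow_div (ht : ‖t‖ < 1) :
    Tendsto (fun j : ℕ ↦ 2 ^ j * (t ^ 2 ^ j / (1 - t ^ 2 ^ j))) atTop (𝓝 0) := by
  have hpow : Tendsto (fun j : ℕ ↦ t ^ 2 ^ j) atTop (𝓝 0) :=
    (tendsto_pow_atTop_nhds_zero_of_norm_lt_one ht).comp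
      (tendsto_pow_atTop_atTop_of_one_lt (one_lt_two : 1 < (2 : ℕ)))
  have hnum : Tendsto (fun j : ℕ ↦ (2 : ℂ) ^ j * t ^ 2 ^ j) atTop (𝓝 0) := by
    rw [tendsto_zero_iff_norm_tendsto_zero]
    simpa using (summable_two_pow_mul_pow_two_pow (norm_nonneg t) ht).tendsto_atTop_zero
  have h := hnum.div (tendsto_const_nhds.sub hpow) (by norm_num : (1 : ℂ) - 0 ≠ 0)
  rw [zero_div] at h
  exact h.congr fun j ↦ mul_div_assoc _ _ _

lemma summable_two_pow_mul_pow_odd_sub_pow_even (ht : ‖t‖ < 1) :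
    Summable fun p : ℕ × ℕ ↦
      (2 : ℂ) ^ p.1 * ((t ^ 2 ^ p.1) ^ (2 * p.2 + 1) - (t ^ 2 ^ p.1) ^ (2 * p.2 + 2)) := by
  set r := ‖t‖
  have hbound : Summable fun p : ℕ × ℕ ↦ 2 * ((2 : ℝ) ^ p.1 * r ^ 2 ^ p.1) * r ^ p.2 :=
    ((summable_two_pow_mul_pow_two_pow (norm_nonneg t) ht).mul_left 2).mul_of_nonneg
      (summable_geometric_of_lt_one (norm_nonneg t) ht) (fun _ ↦ by positivity)
      (fun _ ↦ by positivity)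
  refine Summable.of_norm_bounded hbound fun ⟨j, m⟩ ↦ ?_
  have hx : ‖t ^ 2 ^ j‖ ≤ r := norm_pow_two_pow_le ht.le j
  calc _ ≤ 2 ^ j * (2 * r ^ 2 ^ j * (r ^ 2 ^ j) ^ m) := by
        rw [norm_mul, norm_pow, RCLike.norm_ofNat, ← norm_pow]
        gcongr
        exact norm_pow_odd_sub_pow_even_le (hx.trans ht.le) m
    _ ≤ 2 * (2 ^ j * r ^ 2 ^ j) * r ^ m := by
        rw [norm_pow] at hx
        rw [show ∀ a b c : ℝ, a * (2 * b * c) = 2 * (a * b) * c by intros; ring]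
        gcongr

theorem hasSum_two_pow_mul_pow_odd_sub_pow_even (ht : ‖t‖ < 1) :
    HasSum (fun p : ℕ × ℕ ↦
      (2 : ℂ) ^ p.1 * ((t ^ 2 ^ p.1) ^ (2 * p.2 + 1) - (t ^ 2 ^ p.1) ^ (2 * p.2 + 2)))
      (t / (1 - t)) := by
  set g : ℕ → ℂ := fun j ↦ 2 ^ j * (t ^ 2 ^ j / (1 - t ^ 2 ^ j))
  have hrow (j : ℕ) : HasSum (fun m : ℕ ↦ (2 : ℂ) ^ j *
      ((t ^ 2 ^ j) ^ (2 * m + 1) - (t ^ 2 ^ j) ^ (2 * m + 2))) (g j - g (j + 1)) := by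
    rw [← two_pow_mul_div_one_add_pow_two_pow ht j]
    exact (hasSum_pow_odd_sub_pow_even ((norm_pow_two_pow_le ht.le j).trans_lt ht)).mul_left _
  have hsum := (summable_two_pow_mul_pow_odd_sub_pow_even ht).hasSum
  have hrows := hsum.prod_fiberwise hrow
  have htelescope := hasSum_sub_succ_of_tendsto hrows.summable
    (tendsto_two_pow_mul_pow_two_pow_div ht)
  have hg0 : g 0 - 0 = t / (1 - t) := by simp [g]
  rwa [hrows.unique htelescope, hg0] at hsum

end Dyadic

theorem hasSum_q_multisection (t : ℂ) (ht : ‖t‖ < 1) :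
    HasSum (fun p : ℕ × ℕ+ =>
        (2 : ℂ) ^ p.1 * (t ^ ((2 * (p.2 : ℕ) - 1) * 2 ^ p.1) - t ^ ((2 * (p.2 : ℕ)) * 2 ^ p.1)))
      (t / (1 - t)) := by
  rw [← ((Equiv.refl ℕ).prodCongr Equiv.pnatEquivNat.symm).hasSum_iff]
  refine (hasSum_two_pow_mul_pow_odd_sub_pow_even ht).congr_fun fun ⟨j, m⟩ ↦ ?_
  have hm : 2 * (m + 1) - 1 = 2 * m + 1 := by omega
  show 2 ^ j * (t ^ ((2 * (m + 1) - 1) * 2 ^ j) - t ^ (2 * (m + 1) * 2 ^ j)) = _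
  rw [hm]
  ring
end

section
/- For every real t with |t| < 1 and every q ∈ ℂ with |q| < 2, ∑_{k=0}^∞ q^k · (t^{2^k} − (q−1) t^{2^{k+1}})/(1 − t^{2^{k+1}}) = t/(1−t). -/
/-!
With `φ(w) = w / (1 - w)` and `χ(w) = (w - (q - 1) w²) / (1 - w²)` one has
`φ(w) - χ(w) = q φ(w²)`. Hence the `k`-th term `q^k χ(z^(2^k))` equals
`q^k φ(z^(2^k)) - q^(k+1) φ(z^(2^(k+1)))`, and the series telescopes to `φ(z)`.
The sequence `q^k φ(z^(2^k))` is summable for every `q` because `z^(2^k)` decays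
doubly exponentially, which beats the geometric growth of `q^k`.
-/

open Filter Topology

theorem Summable.hasSum_sub_succ {G : Type*} [AddCommGroup G] [TopologicalSpace G]
    [IsTopologicalAddGroup G] {f : ℕ → G} (hf : Summable f) :
    HasSum (fun n ↦ f n - f (n + 1)) (f 0) := by
  have hshift := (hasSum_nat_add_iff' 1).2 hf.hasSum
  simpa using hf.hasSum.sub hshift

theorem summable_pow_mul_pow_two_pow (c : ℝ) {r : ℝ} (hr₀ : 0 ≤ r) (hr₁ : r < 1) :
    Summable fun k : ℕ ↦ c ^ k * r ^ 2 ^ k := by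
  have hratio : Tendsto (fun k : ℕ ↦ |c| * r ^ 2 ^ k) atTop (𝓝 0) := by
    simpa using ((tendsto_pow_atTop_nhds_zero_of_lt_one hr₀ hr₁).comp
      (tendsto_pow_atTop_atTop_of_one_lt one_lt_two)).const_mul |c|
  refine summable_of_ratio_norm_eventually_le (r := 1 / 2) (by norm_num) ?_
  filter_upwards [hratio.eventually (eventually_le_nhds (by norm_num : (0 : ℝ) < 1 / 2))]
    with k hk
  have hstep : ‖c ^ (k + 1) * r ^ 2 ^ (k + 1)‖ = |c| * r ^ 2 ^ k * ‖c ^ k * r ^ 2 ^ k‖ := by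
    simp only [Real.norm_eq_abs, abs_mul, abs_pow, abs_of_nonneg hr₀, pow_succ, pow_mul]
    ring
  rw [hstep]
  exact mul_le_mul_of_nonneg_right hk (norm_nonneg _)

theorem div_one_sub_sub_div_one_sub_sq {K : Type*} [Field K] (q w : K) (hw : 1 - w ^ 2 ≠ 0) :
    w / (1 - w) - (w - (q - 1) * w ^ 2) / (1 - w ^ 2) = q * (w ^ 2 / (1 - w ^ 2)) := by
  have hw' : 1 - w ≠ 0 := fun h ↦ hw (by linear_combination (1 + w) * h)
  field_simp
  ring

section NormedField

variable {𝕜 : Type*} [NormedField 𝕜]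

theorem one_sub_norm_le_norm_one_sub_pow {z : 𝕜} (hz : ‖z‖ ≤ 1) {n : ℕ} (hn : n ≠ 0) :
    1 - ‖z‖ ≤ ‖1 - z ^ n‖ :=
  calc 1 - ‖z‖ ≤ 1 - ‖z‖ ^ n := by
        simpa using sub_le_sub_left (pow_le_pow_of_le_one (norm_nonneg z) hz
          (Nat.one_le_iff_ne_zero.2 hn)) 1
    _ ≤ ‖1 - z ^ n‖ := by simpa using norm_sub_norm_le (1 : 𝕜) (z ^ n)

theorem one_sub_pow_ne_zero_of_norm_lt_one {z : 𝕜} (hz : ‖z‖ < 1) {n : ℕ} (hn : n ≠ 0) :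
    1 - z ^ n ≠ 0 :=
  norm_pos_iff.1 <| (sub_pos.2 hz).trans_le (one_sub_norm_le_norm_one_sub_pow hz.le hn)

theorem summable_pow_mul_pow_two_pow_div [CompleteSpace 𝕜] (q : 𝕜) {z : 𝕜} (hz : ‖z‖ < 1) :
    Summable fun k : ℕ ↦ q ^ k * (z ^ 2 ^ k / (1 - z ^ 2 ^ k)) := by
  refine .of_norm_bounded
    ((summable_pow_mul_pow_two_pow ‖q‖ (norm_nonneg z) hz).div_const (1 - ‖z‖)) fun k ↦ ?_
  rw [norm_mul, norm_div, norm_pow, norm_pow, mul_div_assoc]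
  gcongr
  exact one_sub_norm_le_norm_one_sub_pow hz.le (pow_ne_zero k two_ne_zero)

theorem hasSum_pow_mul_div_one_sub_pow_two_pow [CompleteSpace 𝕜] (q : 𝕜) {z : 𝕜} (hz : ‖z‖ < 1) :
    HasSum (fun k : ℕ ↦ q ^ k * (z ^ 2 ^ k - (q - 1) * z ^ 2 ^ (k + 1)) / (1 - z ^ 2 ^ (k + 1)))
      (z / (1 - z)) := by
  set φ : ℕ → 𝕜 := fun k ↦ q ^ k * (z ^ 2 ^ k / (1 - z ^ 2 ^ k))
  have htelescope : ∀ k, φ k - φ (k + 1) =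
      q ^ k * (z ^ 2 ^ k - (q - 1) * z ^ 2 ^ (k + 1)) / (1 - z ^ 2 ^ (k + 1)) := fun k ↦ by
    have hsq : z ^ 2 ^ (k + 1) = (z ^ 2 ^ k) ^ 2 := by rw [pow_succ, pow_mul]
    have hne := one_sub_pow_ne_zero_of_norm_lt_one hz (pow_ne_zero (k + 1) two_ne_zero)
    rw [hsq] at hne ⊢
    have hfun := div_one_sub_sub_div_one_sub_sq q (z ^ 2 ^ k) hne
    simp only [φ, hsq, pow_succ q]
    linear_combination q ^ k * hfun
  simpa [φ, htelescope] using (summable_pow_mul_pow_two_pow_div q hz).hasSum_sub_succ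

end NormedField

theorem generalized_teixeira_general (t : ℝ) (ht : |t| < 1) (q : ℂ) :
    ∑' k : ℕ, q ^ k * ((t : ℂ) ^ (2 ^ k) - (q - 1) * (t : ℂ) ^ (2 ^ (k + 1)))
        / (1 - (t : ℂ) ^ (2 ^ (k + 1)))
      = (t : ℂ) / (1 - (t : ℂ)) :=
  (hasSum_pow_mul_div_one_sub_pow_two_pow q (by simpa using ht)).tsum_eq

theorem generalized_teixeira (t : ℝ) (ht : |t| < 1) (q : ℂ) (hq : ‖q‖ < 2) :
    ∑' k : ℕ, q ^ k * ((t : ℂ) ^ (2 ^ k) - (q - 1) * (t : ℂ) ^ (2 ^ (k + 1)))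
        / (1 - (t : ℂ) ^ (2 ^ (k + 1)))
      = (t : ℂ) / (1 - (t : ℂ)) :=
  generalized_teixeira_general t ht q
end

section
/- For every real s > 1 and every complex t with |t| < 2^s, ∑_{m≥1} t^{ν₂(m)} / m^s = ζ(s) · (2^s − 1)/(2^s − t). -/
/-!
Writing `m = p ^ k * n` with `p ∤ n` factors the series into the geometric series
`∑ (t / p ^ s) ^ k` times the `p`-free sum `∑_{p ∤ n} n ^ (-s)`. At `t = 1` the series is
`ζ(s)`, which evaluates the `p`-free sum as `(1 - p ^ (-s)) ζ(s)`.
-/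

open Complex

lemma tsum_pnat_one_div_cpow {s : ℂ} (hs : 1 < s.re) :
    ∑' m : ℕ+, 1 / (m : ℂ) ^ s = riemannZeta s := by
  rw [zeta_eq_tsum_one_div_nat_add_one_cpow hs,
    tsum_pnat_eq_tsum_succ (f := fun n : ℕ => 1 / (n : ℂ) ^ s)]
  simp only [Nat.cast_succ]

section

variable (p : ℕ) [hp : Fact p.Prime]

lemma padicValNat_prime_pow_mul {n : ℕ} (hn : ¬p ∣ n) (k : ℕ) :
    padicValNat p (p ^ k * n) = k := by
  have hn0 : n ≠ 0 := by rintro rfl; exact hn (dvd_zero p)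
  rw [padicValNat.mul (pow_ne_zero k hp.out.ne_zero) hn0, padicValNat.prime_pow,
    padicValNat.eq_zero_of_not_dvd hn, add_zero]

lemma not_dvd_div_pow_padicValNat {m : ℕ} (hm : m ≠ 0) :
    ¬p ∣ m / p ^ padicValNat p m := by
  simpa only [Nat.factorization_def m hp.out] using Nat.not_dvd_ordCompl hp.out hm

def pnatEquivPowMul : ℕ × {n : ℕ // ¬p ∣ n} ≃ ℕ+ where
  toFun x := ⟨p ^ x.1 * x.2, Nat.mul_pos (pow_pos hp.out.pos _)
    (Nat.pos_of_ne_zero fun h => x.2.2 (h ▸ dvd_zero p))⟩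
  invFun m :=
    (padicValNat p m, ⟨m / p ^ padicValNat p m, not_dvd_div_pow_padicValNat p m.ne_zero⟩)
  left_inv := by
    rintro ⟨k, n, hn⟩
    simp [padicValNat_prime_pow_mul p hn, pow_pos hp.out.pos]
  right_inv m := PNat.eq (Nat.mul_div_cancel' pow_padicValNat_dvd)

variable {p} {s : ℂ}

lemma norm_natCast_cpow_prime : ‖(p : ℂ) ^ s‖ = (p : ℝ) ^ s.re :=
  norm_natCast_cpow_of_pos hp.out.pos s

lemma one_lt_natCast_rpow (hs : 0 < s.re) : 1 < (p : ℝ) ^ s.re :=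
  Real.one_lt_rpow (by exact_mod_cast hp.out.one_lt) hs

lemma pow_padicValNat_div_cpow_pnatEquivPowMul (t : ℂ) (x : ℕ × {n : ℕ // ¬p ∣ n}) :
    t ^ padicValNat p (pnatEquivPowMul p x) / ((pnatEquivPowMul p x : ℕ) : ℂ) ^ s
      = (t / (p : ℂ) ^ s) ^ x.1 * (1 / ((x.2 : ℕ) : ℂ) ^ s) := by
  obtain ⟨k, n, hn⟩ := x
  change t ^ padicValNat p (p ^ k * n) / ((p ^ k * n : ℕ) : ℂ) ^ s = _
  rw [padicValNat_prime_pow_mul p hn, Nat.cast_mul, natCast_mul_natCast_cpow, Nat.cast_pow,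
    ← natCast_cpow_natCast_mul, cpow_nat_mul, div_pow]
  ring

theorem tsum_pow_padicValNat_div_cpow_eq_mul_tsum_not_dvd (hs : 1 < s.re) {t : ℂ}
    (ht : ‖t‖ < (p : ℝ) ^ s.re) :
    ∑' m : ℕ+, t ^ padicValNat p m / (m : ℂ) ^ s
      = (1 - t / (p : ℂ) ^ s)⁻¹ * ∑' n : {n : ℕ // ¬p ∣ n}, 1 / ((n : ℕ) : ℂ) ^ s := by
  have hq : ‖t / (p : ℂ) ^ s‖ < 1 := by
    rwa [norm_div, norm_natCast_cpow_prime, div_lt_one (zero_lt_one.trans (one_lt_natCast_rpow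
      (by linarith)))]
  rw [← (pnatEquivPowMul p).tsum_eq, ← tsum_geometric_of_norm_lt_one hq,
    tsum_mul_tsum_of_summable_norm
      (by simpa using summable_geometric_of_lt_one (norm_nonneg _) hq)
      ((summable_norm_iff.mpr (summable_one_div_nat_cpow.mpr hs)).subtype _)]
  exact tsum_congr (pow_padicValNat_div_cpow_pnatEquivPowMul t)

theorem tsum_not_dvd_one_div_cpow (hs : 1 < s.re) :
    ∑' n : {n : ℕ // ¬p ∣ n}, 1 / ((n : ℕ) : ℂ) ^ s = (1 - 1 / (p : ℂ) ^ s) * riemannZeta s := by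
  have hp_s : 1 < (p : ℝ) ^ s.re := one_lt_natCast_rpow (by linarith)
  have hfactor : (1 : ℂ) - 1 / (p : ℂ) ^ s ≠ 0 := by
    rw [sub_ne_zero, ne_comm, one_div, inv_ne_one]
    intro h
    simpa [h] using (norm_natCast_cpow_prime (p := p) (s := s)).trans_gt hp_s
  have hzeta :=
    tsum_pow_padicValNat_div_cpow_eq_mul_tsum_not_dvd hs (t := 1) (by simpa using hp_s)
  simp only [one_pow, tsum_pnat_one_div_cpow hs] at hzeta
  rw [hzeta, ← mul_assoc, mul_inv_cancel₀ hfactor, one_mul]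

theorem tsum_pow_padicValNat_div_cpow (hs : 1 < s.re) {t : ℂ} (ht : ‖t‖ < (p : ℝ) ^ s.re) :
    ∑' m : ℕ+, t ^ padicValNat p m / (m : ℂ) ^ s
      = riemannZeta s * ((p : ℂ) ^ s - 1) / ((p : ℂ) ^ s - t) := by
  have ht' : ‖t‖ < ‖(p : ℂ) ^ s‖ := (norm_natCast_cpow_prime (p := p)).symm ▸ ht
  have hw : (p : ℂ) ^ s ≠ 0 := norm_pos_iff.mp ((norm_nonneg t).trans_lt ht')
  have hwt : (p : ℂ) ^ s - t ≠ 0 := sub_ne_zero.mpr fun h => (h ▸ ht').false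
  rw [tsum_pow_padicValNat_div_cpow_eq_mul_tsum_not_dvd hs ht, tsum_not_dvd_one_div_cpow hs]
  field_simp

end

theorem dirichlet_series_t_valuation (s : ℝ) (hs : 1 < s) (t : ℂ)
    (ht : ‖t‖ < (2 : ℝ) ^ s) :
    ∑' m : ℕ+, t ^ (padicValNat 2 m) / (m : ℂ) ^ (s : ℂ)
      = riemannZeta s * ((2 : ℂ) ^ (s : ℂ) - 1) / ((2 : ℂ) ^ (s : ℂ) - t) := by
  simpa using tsum_pow_padicValNat_div_cpow (p := 2) (s := s) (by simpa using hs) (t := t)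
    (by simpa using ht)
end

section
/- For every real s > 1, ∑_{m≥1} cos(π ν₂(m)/2) / m^s = ζ(s) · (4^s − 2^s)/(4^s + 1). -/
/-! Writing `m = 2 ^ k * (2 * j + 1)` factors the series as
`(∑ₖ cos (π k / 2) 2^(-k s)) * ∑ⱼ (2 j + 1)^(-s)`. Since `cos (π k / 2) = (iᵏ + (-i)ᵏ) / 2`,
the first factor is a sum of two geometric series, equal to `(1 + 4^(-s))⁻¹`; the second is
`(1 - 2^(-s)) ζ(s)`, by the same factorisation applied to the constant weight `1`. -/

open Complex
open scoped Real

lemma padicValNat_two_pow_mul_odd (k j : ℕ) : padicValNat 2 (2 ^ k * (2 * j + 1)) = k := by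
  rw [padicValNat.mul (by positivity) (by omega), padicValNat.prime_pow,
    padicValNat.eq_zero_of_not_dvd (by omega), add_zero]

noncomputable def twoPowMulOddEquiv : ℕ × ℕ ≃ ℕ+ :=
  Equiv.ofBijective (fun p => ⟨2 ^ p.1 * (2 * p.2 + 1), by positivity⟩) <| by
    constructor
    · rintro ⟨k, j⟩ ⟨k', j'⟩ h
      have h : 2 ^ k * (2 * j + 1) = 2 ^ k' * (2 * j' + 1) := congrArg Subtype.val h
      obtain rfl : k = k' := by
        simpa only [padicValNat_two_pow_mul_odd] using congrArg (padicValNat 2) h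
      have := Nat.eq_of_mul_eq_mul_left (Nat.two_pow_pos k) h
      simp only [Prod.mk.injEq, true_and]
      omega
    · rintro ⟨n, hn⟩
      obtain ⟨k, m, ⟨j, rfl⟩, rfl⟩ := Nat.exists_eq_two_pow_mul_odd hn.ne'
      exact ⟨(k, j), rfl⟩

lemma twoPowMulOddEquiv_apply (k j : ℕ) :
    (twoPowMulOddEquiv (k, j) : ℕ) = 2 ^ k * (2 * j + 1) := rfl

lemma two_pow_cpow (k : ℕ) (s : ℂ) : ((2 : ℂ) ^ k) ^ s = ((2 : ℂ) ^ s) ^ k := by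
  simpa using (natCast_cpow_natCast_mul 2 k s).symm.trans (cpow_nat_mul 2 k s)

lemma norm_two_cpow_inv_lt_one {s : ℂ} (hs : 0 < s.re) : ‖((2 : ℂ) ^ s)⁻¹‖ < 1 := by
  have h : ‖(2 : ℂ) ^ s‖ = 2 ^ s.re := by simpa using Complex.norm_natCast_cpow_of_pos two_pos s
  rw [norm_inv, h]
  exact inv_lt_one_of_one_lt₀ (Real.one_lt_rpow one_lt_two hs)

lemma riemannZeta_eq_tsum_pnat {s : ℂ} (hs : 1 < s.re) :
    riemannZeta s = ∑' m : ℕ+, 1 / (m : ℂ) ^ s := by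
  rw [zeta_eq_tsum_one_div_nat_add_one_cpow hs,
    tsum_pnat_eq_tsum_succ (f := fun n => 1 / (n : ℂ) ^ s)]
  push_cast
  rfl

theorem tsum_pnat_comp_padicValNat_two_div_cpow {g : ℕ → ℂ} {C : ℝ} (hg : ∀ k, ‖g k‖ ≤ C)
    {s : ℂ} (hs : 1 < s.re) :
    ∑' m : ℕ+, g (padicValNat 2 m) / (m : ℂ) ^ s
      = (∑' k, g k * ((2 : ℂ) ^ s)⁻¹ ^ k) * ∑' j : ℕ, 1 / ((2 * j + 1 : ℕ) : ℂ) ^ s := by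
  have hq := norm_two_cpow_inv_lt_one (s := s) (by linarith)
  have hpow : Summable fun k => ‖g k * ((2 : ℂ) ^ s)⁻¹ ^ k‖ := by
    refine .of_nonneg_of_le (fun _ => norm_nonneg _) (fun k => ?_)
      ((summable_geometric_of_lt_one (norm_nonneg _) hq).mul_left C)
    rw [norm_mul, norm_pow]
    exact mul_le_mul_of_nonneg_right (hg k) (by positivity)
  have hodd : Summable fun j : ℕ => ‖1 / ((2 * j + 1 : ℕ) : ℂ) ^ s‖ :=
    summable_norm_iff.2 <| (Complex.summable_one_div_nat_cpow.2 hs).comp_injective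
      fun a b h => by simpa using h
  rw [← twoPowMulOddEquiv.tsum_eq, tsum_mul_tsum_of_summable_norm hpow hodd]
  refine tsum_congr fun ⟨k, j⟩ => ?_
  rw [twoPowMulOddEquiv_apply, padicValNat_two_pow_mul_odd, Nat.cast_mul,
    natCast_mul_natCast_cpow, Nat.cast_pow, Nat.cast_ofNat, two_pow_cpow]
  ring

lemma tsum_one_div_odd_cpow {s : ℂ} (hs : 1 < s.re) :
    ∑' j : ℕ, 1 / ((2 * j + 1 : ℕ) : ℂ) ^ s = (1 - ((2 : ℂ) ^ s)⁻¹) * riemannZeta s := by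
  have hq := norm_two_cpow_inv_lt_one (s := s) (by linarith)
  have hζ := tsum_pnat_comp_padicValNat_two_div_cpow (g := fun _ => 1) (C := 1)
    (fun _ => by simp) hs
  simp only [one_mul] at hζ
  rw [tsum_geometric_of_norm_lt_one hq] at hζ
  have hq1 : 1 - ((2 : ℂ) ^ s)⁻¹ ≠ 0 := sub_ne_zero.2 fun h => by simp [← h] at hq
  rw [riemannZeta_eq_tsum_pnat hs, hζ, ← mul_assoc, mul_inv_cancel₀ hq1, one_mul]

lemma ofReal_cos_pi_mul_div_two (k : ℕ) :
    (Real.cos (π * k / 2) : ℂ) = (I ^ k + (-I) ^ k) / 2 := by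
  rw [ofReal_cos, Complex.cos]
  push_cast
  rw [show π * k / 2 * I = k * (π / 2 * I) by ring,
    show -(π * k / 2) * I = k * (-π / 2 * I) by ring, exp_nat_mul, exp_nat_mul,
    exp_pi_div_two_mul_I, exp_neg_pi_div_two_mul_I]

lemma hasSum_cos_pi_mul_div_two_mul_pow {y : ℂ} (hy : ‖y‖ < 1) :
    HasSum (fun k : ℕ => (Real.cos (π * k / 2) : ℂ) * y ^ k) (1 + y ^ 2)⁻¹ := by
  have hI : ‖I * y‖ < 1 := by simpa using hy
  have hnI : ‖-I * y‖ < 1 := by simpa using hy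
  have h₁ : 1 - I * y ≠ 0 := sub_ne_zero.2 fun h => by simp [← h] at hI
  have h₂ : 1 - -I * y ≠ 0 := sub_ne_zero.2 fun h => by simp [← h] at hnI
  have hterm : (fun k : ℕ => (Real.cos (π * k / 2) : ℂ) * y ^ k)
      = fun k => ((I * y) ^ k + (-I * y) ^ k) / 2 := by
    ext k
    rw [ofReal_cos_pi_mul_div_two, mul_pow, mul_pow]
    ring
  have hsum : (1 + y ^ 2)⁻¹ = ((1 - I * y)⁻¹ + (1 - -I * y)⁻¹) / 2 := by
    have hprod : (1 - I * y) * (1 - -I * y) = 1 + y ^ 2 := by linear_combination -y ^ 2 * I_sq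
    rw [inv_add_inv h₁ h₂, hprod]
    ring
  rw [hterm, hsum]
  exact ((hasSum_geometric_of_norm_lt_one hI).add
    (hasSum_geometric_of_norm_lt_one hnI)).div_const 2

theorem dirichlet_series_cos_half_pi_valuation (s : ℝ) (hs : 1 < s) :
    ∑' m : ℕ+, (Real.cos (Real.pi * padicValNat 2 m / 2) : ℂ) / (m : ℂ) ^ (s : ℂ)
      = riemannZeta s * ((4 : ℂ) ^ (s : ℂ) - (2 : ℂ) ^ (s : ℂ))
        / ((4 : ℂ) ^ (s : ℂ) + 1) := by
  have hs' : 1 < (s : ℂ).re := by simpa using hs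
  have hq := norm_two_cpow_inv_lt_one (zero_lt_one.trans hs')
  have h4 : (4 : ℂ) ^ (s : ℂ) = ((2 : ℂ) ^ (s : ℂ)) ^ 2 := by
    have h := natCast_mul_natCast_cpow 2 2 s
    norm_num at h
    rw [h, sq]
  rw [tsum_pnat_comp_padicValNat_two_div_cpow (g := fun k => (Real.cos (π * k / 2) : ℂ)) (C := 1)
      (fun _ => (norm_real _).trans_le (Real.abs_cos_le_one _)) hs',
    (hasSum_cos_pi_mul_div_two_mul_pow hq).tsum_eq, tsum_one_div_odd_cpow hs', h4]
  have h2 : (2 : ℂ) ^ (s : ℂ) = ((2 ^ s : ℝ) : ℂ) := by norm_num [ofReal_cpow zero_le_two]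
  have hne : ((2 ^ s : ℝ) : ℂ) ^ 2 + 1 ≠ 0 := by
    exact_mod_cast (by positivity : (2 ^ s : ℝ) ^ 2 + 1 ≠ 0)
  rw [h2]
  field_simp
end

section
/- For every real s > 1 and real x, ∑_{m≥1} cos(2π x ν₂(m)) / m^s = ζ(s) · ((2^s − 1)/2^{s+1}) · (cos(2πx) − 2^s)/(cos(2πx) − (2^s + 2^{−s})/2). -/
/-!
For `‖z‖ ≤ 1` let `F(z) = ∑ z ^ ν₂(n) / n ^ s`. Since `ν₂(2n) = ν₂(n) + 1`, the even terms of `F(z)`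
sum to `z 2⁻ˢ F(z)`, so `(1 - z 2⁻ˢ) F(z)` is the sum over odd `n` of `n⁻ˢ`, independent of `z`;
at `z = 1` this identifies it with `(1 - 2⁻ˢ) ζ(s)`. With `z = e^{iθ}` the cosine series is
`(F(z) + F(z⁻¹)) / 2`, and adding the two geometric factors gives the closed form.
-/

open Complex LSeries

theorem LSeries.term_mul_of_apply_mul {f : ℕ → ℂ} {q : ℕ} {a : ℂ} (hq : q ≠ 0)
    (hf : ∀ n ≠ 0, f (q * n) = a * f n) (s : ℂ) (n : ℕ) :
    term f s (q * n) = a * (q : ℂ) ^ (-s) * term f s n := by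
  rcases eq_or_ne n 0 with rfl | hn
  · simp
  rw [term_of_ne_zero (mul_ne_zero hq hn), term_of_ne_zero hn, hf n hn, Nat.cast_mul,
    natCast_mul_natCast_cpow, cpow_neg]
  field_simp

theorem LSeries_mul_one_sub_eq_tsum_odd {f : ℕ → ℂ} {a s : ℂ}
    (hf : ∀ n ≠ 0, f (2 * n) = a * f n) (hsum : LSeriesSummable f s) :
    LSeries f s * (1 - a * 2 ^ (-s)) = ∑' k, term f s (2 * k + 1) := by
  have heven : ∑' k, term f s (2 * k) = a * 2 ^ (-s) * LSeries f s := by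
    simp_rw [term_mul_of_apply_mul two_ne_zero hf, Nat.cast_ofNat, tsum_mul_left, LSeries]
  have hsplit : a * 2 ^ (-s) * LSeries f s + ∑' k, term f s (2 * k + 1) = LSeries f s :=
    heven ▸ tsum_even_add_odd (hsum.comp_injective (mul_right_injective₀ two_ne_zero))
      (hsum.comp_injective ((add_left_injective 1).comp (mul_right_injective₀ two_ne_zero)))
  linear_combination -hsplit

theorem LSeriesSummable_pow_padicValNat {p : ℕ} {z s : ℂ} (hz : ‖z‖ ≤ 1) (hs : 1 < s.re) :
    LSeriesSummable (fun n ↦ z ^ padicValNat p n) s :=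
  LSeriesSummable_of_bounded_of_one_lt_re (m := 1) (fun n _ ↦ by
    simpa only [norm_pow] using pow_le_one₀ (norm_nonneg z) hz) hs

theorem one_sub_mul_two_cpow_neg_ne_zero {z s : ℂ} (hz : ‖z‖ ≤ 1) (hs : 0 < s.re) :
    1 - z * 2 ^ (-s) ≠ 0 := by
  have h2 : ‖(2 : ℂ) ^ (-s)‖ < 1 := by
    rw [← Nat.cast_ofNat, norm_natCast_cpow_of_pos two_pos, neg_re]
    exact Real.rpow_lt_one_of_one_lt_of_neg one_lt_two (neg_neg_of_pos hs)
  have hlt : ‖z * 2 ^ (-s)‖ < 1 := by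
    rw [norm_mul]
    nlinarith [norm_nonneg z, norm_nonneg ((2 : ℂ) ^ (-s))]
  intro h
  rw [← sub_eq_zero.mp h, norm_one] at hlt
  exact hlt.false

theorem LSeries_pow_padicValNat_two {z s : ℂ} (hz : ‖z‖ ≤ 1) (hs : 1 < s.re) :
    LSeries (fun n ↦ z ^ padicValNat 2 n) s
      = riemannZeta s * (1 - 2 ^ (-s)) / (1 - z * 2 ^ (-s)) := by
  have mul_one_sub_eq : ∀ w : ℂ, ‖w‖ ≤ 1 →
      LSeries (fun n ↦ w ^ padicValNat 2 n) s * (1 - w * 2 ^ (-s))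
        = ∑' k, term 1 s (2 * k + 1) := by
    intro w hw
    refine (LSeries_mul_one_sub_eq_tsum_odd (fun n hn ↦ ?_)
      (LSeriesSummable_pow_padicValNat hw hs)).trans (tsum_congr fun k ↦ ?_)
    · rw [padicValNat.mul two_ne_zero hn, padicValNat_self, pow_add, pow_one]
    · have hodd : ¬ 2 ∣ 2 * k + 1 := by omega
      simp only [term_of_ne_zero (2 * k).succ_ne_zero, padicValNat.eq_zero_of_not_dvd hodd,
        pow_zero, Pi.one_apply]
  have hζ : riemannZeta s * (1 - 2 ^ (-s)) = ∑' k, term 1 s (2 * k + 1) := by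
    rw [← LSeries_one_eq_riemannZeta hs]
    have h := mul_one_sub_eq 1 norm_one.le
    simp only [one_pow, one_mul] at h
    exact h
  rw [hζ, ← mul_one_sub_eq z hz, mul_div_cancel_right₀]
  exact one_sub_mul_two_cpow_neg_ne_zero hz (by linarith)

theorem Complex.ofReal_cos_mul_natCast (θ : ℝ) (k : ℕ) :
    (Real.cos (θ * k) : ℂ) = (exp (θ * I) ^ k + (exp (θ * I))⁻¹ ^ k) / 2 := by
  rw [ofReal_cos, cos, ← exp_nat_mul, ← exp_neg, ← exp_nat_mul]
  push_cast
  ring_nf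

theorem LSeries_cos_mul_padicValNat_two (θ : ℝ) {s : ℂ} (hs : 1 < s.re) :
    LSeries (fun n ↦ (Real.cos (θ * padicValNat 2 n) : ℂ)) s
      = riemannZeta s * (1 - 2 ^ (-s)) * (1 - Real.cos θ * 2 ^ (-s))
        / (1 - 2 * Real.cos θ * 2 ^ (-s) + (2 ^ (-s)) ^ 2) := by
  set z := exp (θ * I)
  have hz : ‖z‖ = 1 := norm_exp_ofReal_mul_I θ
  have hz_inv : ‖z⁻¹‖ = 1 := by rw [norm_inv, hz, inv_one]
  have hcos : (fun n ↦ (Real.cos (θ * padicValNat 2 n) : ℂ))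
      = (2⁻¹ : ℂ) • ((fun n ↦ z ^ padicValNat 2 n) + fun n ↦ z⁻¹ ^ padicValNat 2 n) := by
    funext n
    rw [ofReal_cos_mul_natCast, Pi.smul_apply, Pi.add_apply, smul_eq_mul, inv_mul_eq_div]
  have hcosθ : (Real.cos θ : ℂ) = (z + z⁻¹) / 2 := by
    simpa using ofReal_cos_mul_natCast θ 1
  rw [hcos, LSeries_smul, LSeries_add (LSeriesSummable_pow_padicValNat hz.le hs)
    (LSeriesSummable_pow_padicValNat hz_inv.le hs), LSeries_pow_padicValNat_two hz.le hs,
    LSeries_pow_padicValNat_two hz_inv.le hs, hcosθ]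
  have hre : 0 < s.re := by linarith
  have hne := one_sub_mul_two_cpow_neg_ne_zero hz.le hre
  have hne_inv := one_sub_mul_two_cpow_neg_ne_zero hz_inv.le hre
  have hden : 1 - 2 * ((z + z⁻¹) / 2) * 2 ^ (-s) + (2 ^ (-s)) ^ 2
      = (1 - z * 2 ^ (-s)) * (1 - z⁻¹ * 2 ^ (-s)) := by
    linear_combination (2 ^ (-s)) ^ 2 * (mul_inv_cancel₀ (exp_ne_zero (θ * I))).symm
  rw [hden, div_add_div _ _ hne hne_inv]
  ring

theorem tsum_pnat_div_cpow_eq_LSeries (f : ℕ → ℂ) (s : ℂ) :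
    ∑' m : ℕ+, f m / (m : ℂ) ^ s = LSeries f s := by
  rw [LSeries, ← tsum_pnat_eq_tsum_of_eq_zero (term_zero f s)]
  exact tsum_congr fun m ↦ (term_of_ne_zero m.ne_zero f s).symm

theorem dirichlet_series_cos_valuation (s : ℝ) (hs : 1 < s) (x : ℝ) :
    ∑' m : ℕ+, (Real.cos (2 * Real.pi * x * padicValNat 2 m) : ℂ) / (m : ℂ) ^ (s : ℂ)
      = riemannZeta s * (((2 : ℂ) ^ (s : ℂ) - 1) / (2 : ℂ) ^ ((s : ℂ) + 1))
        * ((Real.cos (2 * Real.pi * x) : ℂ) - (2 : ℂ) ^ (s : ℂ))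
        / ((Real.cos (2 * Real.pi * x) : ℂ)
            - ((2 : ℂ) ^ (s : ℂ) + (2 : ℂ) ^ (-(s : ℂ))) / 2) := by
  rw [tsum_pnat_div_cpow_eq_LSeries (fun n ↦ (Real.cos (2 * Real.pi * x * padicValNat 2 n) : ℂ)),
    LSeries_cos_mul_padicValNat_two _ (by simpa using hs), cpow_neg,
    cpow_add _ _ two_ne_zero, cpow_one]
  have hp : (2 : ℂ) ^ (s : ℂ) ≠ 0 := cpow_ne_zero_iff.mpr (.inl two_ne_zero)
  generalize (2 : ℂ) ^ (s : ℂ) = p at hp ⊢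
  generalize (Real.cos (2 * Real.pi * x) : ℂ) = c
  have hden : c - (p + p⁻¹) / 2 = -(p / 2) * (1 - 2 * c * p⁻¹ + p⁻¹ ^ 2) := by
    field_simp
    ring
  rw [hden, ← div_div]
  congr 1
  field_simp
  ring
end

section
/- ∑_{m≥1} cos(π ν₂(2m)/3) / m = (ln 2)/3. -/
/-!
Since `{m : ν₂ m = j}` is the set of multiples of `2^j` minus the multiples of `2^(j+1)`, and
`∑_{m ≤ N, d ∣ m} 1/m = H(⌊N/d⌋)/d`, summation by parts turns `∑_{m ≤ N} f(ν₂ m)/m` into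
`∑_k w_k (H(⌊N/2^k⌋) - H(⌊N/2^(k+1)⌋))` with `w_k = 2 G_(k+1) - G_k`, `G_K = ∑_{j<K} f j / 2^(j+1)`.
If `f` is bounded and `f ∘ ν₂` has mean `∑_j f j / 2^(j+1) = 0`, the weights decay like `2^-k`,
each bracket lies in `[0, 1]` and tends to `log 2`, so by dominated convergence the series converges
to `log 2 · ∑_k w_k = -log 2 · ∑_j j f j / 2^(j+1)`.
For `f j = cos(π(j+1)/3)` we have `f j / 2^(j+1) = Re z^(j+1)` with `z = e^(iπ/3)/2` and
`z/(1-z) = i/√3`, so the mean is `Re(i/√3) = 0` and the moment sum is `Re((i/√3)^2) = -1/3`.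
-/

open Filter Finset Real Topology

theorem sum_range_ite_dvd_succ_inv (d N : ℕ) :
    ∑ m ∈ range N, (if d ∣ m + 1 then ((m : ℝ) + 1)⁻¹ else 0) = harmonic (N / d) / d := by
  induction N with
  | zero => simp
  | succ N ih =>
    rw [sum_range_succ, ih]
    by_cases h : d ∣ N + 1
    · have hN : (N : ℝ) + 1 = d * (N / d + 1 : ℕ) := by
        rw [← Nat.succ_div_of_dvd h]; exact_mod_cast (Nat.mul_div_cancel' h).symm
      have hd : (d : ℝ) ≠ 0 := Nat.cast_ne_zero.mpr (by rintro rfl; simp at h)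
      rw [if_pos h, Nat.succ_div_of_dvd h, harmonic_succ, hN]
      push_cast
      field_simp
    · rw [if_neg h, Nat.succ_div_of_not_dvd h, add_zero]

noncomputable def harmonicDyadicGap (M : ℕ) : ℝ := harmonic M - harmonic (M / 2)

theorem harmonicDyadicGap_eq_sum_Ico (M : ℕ) :
    harmonicDyadicGap M = ∑ i ∈ Ico (M / 2) M, ((i : ℝ) + 1)⁻¹ := by
  rw [harmonicDyadicGap, sum_Ico_eq_sub _ (Nat.div_le_self M 2)]
  simp [harmonic]

theorem harmonicDyadicGap_nonneg (M : ℕ) : 0 ≤ harmonicDyadicGap M := by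
  rw [harmonicDyadicGap_eq_sum_Ico]; positivity

theorem harmonicDyadicGap_le_one (M : ℕ) : harmonicDyadicGap M ≤ 1 := by
  have hterm : ∀ i ∈ Ico (M / 2) M, ((i : ℝ) + 1)⁻¹ ≤ ((M / 2 : ℕ) + 1 : ℝ)⁻¹ := by
    intro i hi
    gcongr
    exact_mod_cast (mem_Ico.mp hi).1
  calc harmonicDyadicGap M ≤ #(Ico (M / 2) M) • ((M / 2 : ℕ) + 1 : ℝ)⁻¹ := by
        rw [harmonicDyadicGap_eq_sum_Ico]; exact sum_le_card_nsmul _ _ _ hterm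
    _ = ((M - M / 2 : ℕ) : ℝ) / ((M / 2 : ℕ) + 1) := by
        rw [Nat.card_Ico, nsmul_eq_mul, div_eq_mul_inv]
    _ ≤ 1 := by
        rw [div_le_one (by positivity)]
        exact_mod_cast (by omega : M - M / 2 ≤ M / 2 + 1)

theorem tendsto_harmonicDyadicGap : Tendsto harmonicDyadicGap atTop (𝓝 (log 2)) := by
  have hM := tendsto_harmonic_sub_log
  have hhalf := hM.comp (Nat.tendsto_div_const_atTop two_ne_zero)
  have hratio : Tendsto (fun M : ℕ => ((M / 2 : ℕ) : ℝ) / M) atTop (𝓝 (1 / 2)) := by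
    refine ((tendsto_nat_floor_mul_div_atTop (by norm_num : (0 : ℝ) ≤ 1 / 2)).comp
      tendsto_natCast_atTop_atTop).congr fun M => ?_
    simp only [Function.comp_apply, one_div_mul_eq_div, Nat.floor_div_ofNat, Nat.floor_natCast]
  have hlog := ((continuousAt_log (by norm_num : (1 / 2 : ℝ) ≠ 0)).tendsto.comp hratio).neg
  rw [one_div, log_inv, neg_neg] at hlog
  have := (hM.sub hhalf).add hlog
  rw [sub_self, zero_add] at this
  refine this.congr' ?_
  filter_upwards [eventually_ge_atTop 2] with M hM2
  have h1 : ((M / 2 : ℕ) : ℝ) ≠ 0 := by norm_cast; omega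
  have h2 : (M : ℝ) ≠ 0 := by norm_cast; omega
  simp only [Function.comp_apply, harmonicDyadicGap, log_div h1 h2]
  ring

theorem sum_range_ite_pow_dvd_sub {p : ℕ} [Fact p.Prime] {n L : ℕ} (hn : n ≠ 0)
    (hL : padicValNat p n < L) (f : ℕ → ℝ) (x : ℝ) :
    ∑ j ∈ range L, f j * ((if p ^ j ∣ n then x else 0) - if p ^ (j + 1) ∣ n then x else 0) =
      f (padicValNat p n) * x := by
  rw [sum_eq_single_of_mem _ (mem_range.mpr hL)]
  · simp [padicValNat_dvd_iff_le hn]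
  · intro j _ hj
    simp only [padicValNat_dvd_iff_le hn]
    split_ifs <;> first | (exfalso; omega) | simp

-- `2^-(j+1)` is the density of `{m | ν₂ m = j}`, so the full series is the mean of `f ∘ ν₂`.
noncomputable def dyadicPartialMean (f : ℕ → ℝ) (K : ℕ) : ℝ := ∑ j ∈ range K, f j / 2 ^ (j + 1)

noncomputable def dyadicWeight (f : ℕ → ℝ) (k : ℕ) : ℝ :=
  2 * dyadicPartialMean f (k + 1) - dyadicPartialMean f k

theorem dyadicPartialMean_succ (f : ℕ → ℝ) (K : ℕ) :
    dyadicPartialMean f (K + 1) = dyadicPartialMean f K + f K / 2 ^ (K + 1) :=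
  sum_range_succ _ _

theorem sum_range_mul_dyadic_sub (f A : ℕ → ℝ) (L : ℕ) :
    ∑ j ∈ range L, f j * (A j / 2 ^ j - A (j + 1) / 2 ^ (j + 1)) =
      ∑ k ∈ range L, dyadicWeight f k * (A k - A (k + 1)) + dyadicPartialMean f L * A L := by
  induction L with
  | zero => simp [dyadicPartialMean]
  | succ L ih =>
    rw [sum_range_succ, ih, sum_range_succ, dyadicWeight, dyadicPartialMean_succ]
    field_simp
    ring

theorem sum_range_padicValNat_div_eq (f : ℕ → ℝ) {N L : ℕ} (hL : N < 2 ^ L) :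
    ∑ m ∈ range N, f (padicValNat 2 (m + 1)) / (m + 1) =
      ∑ k ∈ range L, dyadicWeight f k * harmonicDyadicGap (N / 2 ^ k) := by
  have hval : ∀ m ∈ range N, padicValNat 2 (m + 1) < L := fun m hm => by
    have hle := Nat.le_of_dvd m.succ_pos (pow_padicValNat_dvd (p := 2) (n := m + 1))
    have hmN := mem_range.mp hm
    exact (Nat.pow_lt_pow_iff_right one_lt_two).mp (by omega)
  calc ∑ m ∈ range N, f (padicValNat 2 (m + 1)) / (m + 1)
      = ∑ m ∈ range N, ∑ j ∈ range L, f j * ((if 2 ^ j ∣ m + 1 then ((m : ℝ) + 1)⁻¹ else 0) -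
          if 2 ^ (j + 1) ∣ m + 1 then ((m : ℝ) + 1)⁻¹ else 0) := by
        refine sum_congr rfl fun m hm => ?_
        rw [sum_range_ite_pow_dvd_sub m.succ_ne_zero (hval m hm), div_eq_mul_inv]
    _ = ∑ j ∈ range L, f j * ((harmonic (N / 2 ^ j) : ℝ) / 2 ^ j -
          harmonic (N / 2 ^ (j + 1)) / 2 ^ (j + 1)) := by
        rw [sum_comm]
        simp only [← mul_sum, sum_sub_distrib, sum_range_ite_dvd_succ_inv, Nat.cast_pow,
          Nat.cast_ofNat]
    _ = ∑ k ∈ range L, dyadicWeight f k * harmonicDyadicGap (N / 2 ^ k) := by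
        rw [sum_range_mul_dyadic_sub f (fun j => harmonic (N / 2 ^ j)), Nat.div_eq_of_lt hL]
        simp [harmonicDyadicGap, pow_succ, Nat.div_div_eq_div_mul]

theorem sum_range_dyadicWeight (f : ℕ → ℝ) (K : ℕ) :
    ∑ k ∈ range K, dyadicWeight f k =
      (K + 1) * dyadicPartialMean f K - ∑ j ∈ range K, j * f j / 2 ^ (j + 1) := by
  induction K with
  | zero => simp [dyadicPartialMean]
  | succ K ih =>
    rw [sum_range_succ, ih, dyadicWeight, sum_range_succ, dyadicPartialMean_succ]
    push_cast
    ring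

section MeanZero

variable {f : ℕ → ℝ} {B : ℝ}

theorem abs_dyadicPartialMean_le (hf : ∀ j, |f j| ≤ B) (h0 : HasSum (fun j => f j / 2 ^ (j + 1)) 0)
    (K : ℕ) : |dyadicPartialMean f K| ≤ B / 2 ^ K := by
  have htail := (hasSum_nat_add_iff' K).mpr h0
  rw [zero_sub] at htail
  rw [← abs_neg]
  refine htail.norm_le_of_bounded (hasSum_geometric_two' (B / 2 ^ K)) fun i => ?_
  rw [norm_div, norm_pow, Real.norm_ofNat, Real.norm_eq_abs, div_div, div_div, ← pow_succ',
    ← pow_add, add_right_comm, add_comm K]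
  exact div_le_div_of_nonneg_right (hf _) (by positivity)

theorem abs_dyadicWeight_le (hf : ∀ j, |f j| ≤ B) (h0 : HasSum (fun j => f j / 2 ^ (j + 1)) 0)
    (k : ℕ) : |dyadicWeight f k| ≤ 2 * B * (1 / 2) ^ k := by
  have h1 := abs_dyadicPartialMean_le hf h0 (k + 1)
  have h2 := abs_dyadicPartialMean_le hf h0 k
  calc |dyadicWeight f k| ≤ 2 * |dyadicPartialMean f (k + 1)| + |dyadicPartialMean f k| := by
        rw [dyadicWeight, ← abs_two, ← abs_mul, abs_two]; exact abs_sub _ _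
    _ ≤ 2 * (B / 2 ^ (k + 1)) + B / 2 ^ k := by gcongr
    _ = 2 * B * (1 / 2) ^ k := by rw [one_div_pow, pow_succ]; field_simp; ring

theorem hasSum_dyadicWeight (hf : ∀ j, |f j| ≤ B) (h0 : HasSum (fun j => f j / 2 ^ (j + 1)) 0) :
    HasSum (dyadicWeight f) (-∑' j : ℕ, j * f j / 2 ^ (j + 1)) := by
  have hsum : Summable (dyadicWeight f) :=
    .of_norm_bounded ((summable_geometric_two).mul_left (2 * B)) (abs_dyadicWeight_le hf h0)
  have hmoment : Summable fun j : ℕ => j * f j / 2 ^ (j + 1) := by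
    refine .of_norm_bounded ((summable_pow_mul_geometric_of_norm_lt_one 1
      (by norm_num : ‖(1 / 2 : ℝ)‖ < 1)).mul_left B) fun j => ?_
    rw [norm_div, norm_mul, Real.norm_natCast, Real.norm_eq_abs, norm_pow, Real.norm_ofNat,
      pow_one, one_div_pow, pow_succ]
    have := hf j
    field_simp
    nlinarith [j.cast_nonneg (α := ℝ), abs_nonneg (f j)]
  have hvanish : Tendsto (fun K : ℕ => (K + 1) * dyadicPartialMean f K) atTop (𝓝 0) := by
    have hgeom := tendsto_pow_atTop_nhds_zero_of_lt_one (by norm_num : (0 : ℝ) ≤ 1 / 2)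
      (by norm_num)
    have hlim := ((tendsto_self_mul_const_pow_of_abs_lt_one (by norm_num : |(1 / 2 : ℝ)| < 1)).add
      hgeom).const_mul B
    rw [add_zero, mul_zero] at hlim
    refine squeeze_zero_norm (fun K => ?_) hlim
    rw [norm_mul, Real.norm_eq_abs, Real.norm_eq_abs, abs_of_nonneg (by positivity)]
    calc (K + 1 : ℝ) * |dyadicPartialMean f K| ≤ (K + 1) * (B / 2 ^ K) := by
          gcongr; exact abs_dyadicPartialMean_le hf h0 K
      _ = B * (K * (1 / 2) ^ K + (1 / 2) ^ K) := by rw [one_div_pow]; field_simp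
  rw [hsum.hasSum_iff_tendsto_nat]
  simp only [sum_range_dyadicWeight]
  simpa using hvanish.sub hmoment.hasSum.tendsto_sum_nat

theorem tendsto_sum_range_padicValNat_div (hf : ∀ j, |f j| ≤ B)
    (h0 : HasSum (fun j => f j / 2 ^ (j + 1)) 0) :
    Tendsto (fun N : ℕ => ∑ m ∈ range N, f (padicValNat 2 (m + 1)) / (m + 1)) atTop
      (𝓝 (-log 2 * ∑' j : ℕ, j * f j / 2 ^ (j + 1))) := by
  have hfinite : ∀ N : ℕ, ∑ m ∈ range N, f (padicValNat 2 (m + 1)) / (m + 1) =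
      ∑' k, dyadicWeight f k * harmonicDyadicGap (N / 2 ^ k) := fun N => by
    rw [sum_range_padicValNat_div_eq f N.lt_two_pow_self, tsum_eq_sum]
    intro k hk
    rw [Nat.div_eq_of_lt (N.lt_two_pow_self.trans_le
      (Nat.pow_le_pow_right two_pos (not_lt.mp (mem_range.not.mp hk))))]
    simp [harmonicDyadicGap]
  have hlim := tendsto_tsum_of_dominated_convergence
    ((summable_geometric_two).mul_left (2 * B))
    (fun k => (tendsto_harmonicDyadicGap.comp
      (Nat.tendsto_div_const_atTop (pow_ne_zero k two_ne_zero))).const_mul (dyadicWeight f k))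
    (Eventually.of_forall fun N k => by
      rw [Function.comp_apply, norm_mul, Real.norm_eq_abs, Real.norm_eq_abs,
        abs_of_nonneg (harmonicDyadicGap_nonneg _)]
      exact (mul_le_of_le_one_right (abs_nonneg _) (harmonicDyadicGap_le_one _)).trans
        (abs_dyadicWeight_le hf h0 k))
  rw [tsum_mul_right, (hasSum_dyadicWeight hf h0).tsum_eq, mul_comm, mul_neg, ← neg_mul] at hlim
  exact hlim.congr fun N => (hfinite N).symm

end MeanZero

section

open Complex

theorem exp_pi_div_three_mul_I : cexp (↑(π / 3) * I) = 1 / 2 + √3 / 2 * I := by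
  rw [exp_mul_I, ← ofReal_cos, ← ofReal_sin, cos_pi_div_three, sin_pi_div_three]
  push_cast; ring

theorem div_one_sub_eq_I_div_sqrt_three :
    cexp (↑(π / 3) * I) / 2 / (1 - cexp (↑(π / 3) * I) / 2) = I / √3 := by
  have h3 : (√3 : ℂ) ^ 2 = 3 := by norm_cast; simp
  have h3' : (√3 : ℂ) ≠ 0 := by norm_cast; positivity
  have hden : (1 : ℂ) - (1 / 2 + √3 / 2 * I) / 2 ≠ 0 := by
    intro h; have := congrArg Complex.im h; simp at this
  rw [exp_pi_div_three_mul_I, div_eq_div_iff hden h3']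
  ring_nf
  rw [I_sq, h3]
  ring

theorem cos_div_two_pow_eq_re (j : ℕ) :
    Real.cos (π * (j + 1) / 3) / 2 ^ (j + 1) = ((cexp (↑(π / 3) * I) / 2) ^ (j + 1)).re := by
  rw [div_pow, ← Complex.exp_nat_mul, ← mul_assoc, ← ofReal_natCast, ← ofReal_mul,
    ← ofReal_ofNat, ← ofReal_pow, div_ofReal_re, exp_ofReal_mul_I_re]
  push_cast; ring_nf

theorem norm_exp_div_two : ‖cexp (↑(π / 3) * I) / 2‖ < 1 := by
  rw [norm_div, norm_exp_ofReal_mul_I]; norm_num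

theorem hasSum_cos_div_two_pow :
    HasSum (fun j : ℕ => Real.cos (π * (j + 1) / 3) / 2 ^ (j + 1)) 0 := by
  have h := (hasSum_geometric_of_norm_lt_one norm_exp_div_two).mul_left (cexp (↑(π / 3) * I) / 2)
  rw [← div_eq_mul_inv, div_one_sub_eq_I_div_sqrt_three] at h
  convert Complex.hasSum_re h using 1
  · ext j; rw [cos_div_two_pow_eq_re, pow_succ']
  · simp

theorem hasSum_mul_cos_div_two_pow :
    HasSum (fun j : ℕ => j * Real.cos (π * (j + 1) / 3) / 2 ^ (j + 1)) (-1 / 3) := by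
  have h := (hasSum_coe_mul_geometric_of_norm_lt_one norm_exp_div_two).mul_left
    (cexp (↑(π / 3) * I) / 2)
  rw [← mul_div_assoc, ← sq, ← div_pow, div_one_sub_eq_I_div_sqrt_three] at h
  convert Complex.hasSum_re h using 1
  · ext j
    rw [mul_div_assoc, cos_div_two_pow_eq_re, pow_succ', mul_left_comm, ← ofReal_natCast,
      re_ofReal_mul]
  · have h3 : (√3 : ℂ) ^ 2 = 3 := by norm_cast; simp
    rw [div_pow, I_sq, h3]; simp

end

theorem cos_valuation_log_two :
    Filter.Tendsto
      (fun N : ℕ => ∑ m ∈ Finset.range N,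
        Real.cos (Real.pi * padicValNat 2 (2 * (m + 1)) / 3) / (m + 1))
      Filter.atTop (nhds (Real.log 2 / 3)) := by
  have hval : ∀ m : ℕ, (padicValNat 2 (2 * (m + 1)) : ℝ) = padicValNat 2 (m + 1) + 1 := by
    intro m
    rw [padicValNat.mul two_ne_zero m.succ_ne_zero, padicValNat_self]
    push_cast; ring
  have h := tendsto_sum_range_padicValNat_div (fun j => abs_cos_le_one _) hasSum_cos_div_two_pow
  rw [hasSum_mul_cos_div_two_pow.tsum_eq, mul_div_assoc', neg_mul, mul_neg_one, neg_neg] at h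
  simpa only [hval] using h
end

section
/- For every complex q with |q| < 1, the infinite product ∏_{j≥0} (q^{2^j}; q^{2^{j+1}})_∞ equals (q; q)_∞, where (a;q)_∞ = ∏_{k≥0} (1 − a q^k). -/
/-!
Every positive integer is uniquely `2 ^ j * (2 * k + 1)`, so the factors
`1 - q ^ (2 ^ j * (2 * k + 1))` of the left-hand side are exactly the factors `1 - q ^ n`, `n ≥ 1`, of `(q; q)_∞`, each met once.
Since `∑ ‖q‖ ^ n < ∞`, the product converges unconditionally and may be regrouped along this
bijection `ℕ × ℕ ≃ ℕ`.
-/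

namespace Nat

lemma factorization_two_pow_mul_odd (j k : ℕ) : (2 ^ j * (2 * k + 1)).factorization 2 = j := by
  have hodd : ¬2 ∣ 2 * k + 1 := by omega
  rw [factorization_mul (by positivity) (by omega), Prime.factorization_pow prime_two]
  simp [factorization_eq_zero_of_not_dvd hodd]

lemma two_pow_mul_odd_injective :
    Function.Injective fun p : ℕ × ℕ => 2 ^ p.1 * (2 * p.2 + 1) := by
  rintro ⟨j, k⟩ ⟨j', k'⟩ h
  have hj : j = j' := by
    simpa only [factorization_two_pow_mul_odd] using congrArg (·.factorization 2) h
  subst hj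
  have hk : 2 * k + 1 = 2 * k' + 1 := Nat.eq_of_mul_eq_mul_left (by positivity) h
  simp only [Prod.mk.injEq, true_and]
  omega

lemma exists_two_pow_mul_odd_eq_succ (n : ℕ) : ∃ p : ℕ × ℕ, 2 ^ p.1 * (2 * p.2 + 1) = n + 1 := by
  obtain ⟨j, m, ⟨k, rfl⟩, hn⟩ := exists_eq_two_pow_mul_odd n.succ_ne_zero
  exact ⟨(j, k), hn.symm⟩

noncomputable def twoPowMulOddEquiv : ℕ × ℕ ≃ ℕ :=
  Equiv.ofBijective (fun p => 2 ^ p.1 * (2 * p.2 + 1) - 1) <| by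
    constructor
    · intro p p' h
      have hp : 0 < 2 ^ p.1 * (2 * p.2 + 1) := by positivity
      have hp' : 0 < 2 ^ p'.1 * (2 * p'.2 + 1) := by positivity
      exact two_pow_mul_odd_injective (by simp only at h ⊢; omega)
    · intro n
      obtain ⟨p, hp⟩ := exists_two_pow_mul_odd_eq_succ n
      exact ⟨p, by simp only [hp, add_tsub_cancel_right]⟩

lemma twoPowMulOddEquiv_add_one (p : ℕ × ℕ) :
    twoPowMulOddEquiv p + 1 = 2 ^ p.1 * (2 * p.2 + 1) :=
  Nat.sub_add_cancel (Nat.one_le_iff_ne_zero.mpr (by positivity))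

end Nat

section

variable {R : Type*} [NormedCommRing R] [NormOneClass R] [CompleteSpace R] {q : R}

lemma multipliable_one_sub_pow_of_injective {ι : Type*} (hq : ‖q‖ < 1) {m : ι → ℕ}
    (hm : Function.Injective m) : Multipliable fun i => 1 - q ^ m i := by
  have hgeom : Summable fun i => ‖q‖ ^ m i :=
    (summable_geometric_of_lt_one (norm_nonneg q) hq).comp_injective hm
  simpa only [sub_eq_add_neg] using multipliable_one_add_of_summable
    (hgeom.of_nonneg_of_le (fun _ => norm_nonneg _) fun i => (norm_neg (q ^ m i)).trans_le
      (norm_pow_le q (m i)))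

theorem tprod_tprod_one_sub_pow_two_pow_mul_odd (hq : ‖q‖ < 1) :
    ∏' j : ℕ, ∏' k : ℕ, (1 - q ^ (2 ^ j * (2 * k + 1))) = ∏' n : ℕ, (1 - q ^ (n + 1)) := by
  have hfactor (j : ℕ) : Multipliable fun k : ℕ => 1 - q ^ (2 ^ j * (2 * k + 1)) :=
    multipliable_one_sub_pow_of_injective hq (Nat.two_pow_mul_odd_injective.comp (Prod.mk_right_injective j))
  have hprod : Multipliable fun p : ℕ × ℕ => 1 - q ^ (2 ^ p.1 * (2 * p.2 + 1)) :=
    multipliable_one_sub_pow_of_injective hq Nat.two_pow_mul_odd_injective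
  calc ∏' j : ℕ, ∏' k : ℕ, (1 - q ^ (2 ^ j * (2 * k + 1)))
      = ∏' p : ℕ × ℕ, (1 - q ^ (2 ^ p.1 * (2 * p.2 + 1))) := (hprod.tprod_prod' hfactor).symm
    _ = ∏' p : ℕ × ℕ, (1 - q ^ (Nat.twoPowMulOddEquiv p + 1)) := by
        simp only [Nat.twoPowMulOddEquiv_add_one]
    _ = ∏' n : ℕ, (1 - q ^ (n + 1)) := Nat.twoPowMulOddEquiv.tprod_eq fun n => 1 - q ^ (n + 1)

end

theorem qPochhammer_multisection (q : ℂ) (hq : ‖q‖ < 1) :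
    ∏' j : ℕ, ∏' k : ℕ, (1 - q ^ (2 ^ j) * (q ^ (2 ^ (j + 1))) ^ k)
      = ∏' k : ℕ, (1 - q * q ^ k) := by
  have hpow (j k : ℕ) : q ^ (2 ^ j) * (q ^ (2 ^ (j + 1))) ^ k = q ^ (2 ^ j * (2 * k + 1)) := by
    rw [← pow_mul, ← pow_add]
    ring_nf
  simp only [hpow, ← pow_succ', tprod_tprod_one_sub_pow_two_pow_mul_odd hq]
end

section
/- For every real x, ∏_{j≥0} cosh(πx / 2^{j+1}) = sinh(πx)/(πx), where the right-hand side is interpreted as 1 when x = 0. -/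
/-!
Telescoping the double-angle formula `sinh (2y) = 2 sinh y cosh y` gives
`(∏_{j<n} cosh (c / 2^(j+1))) · 2^n sinh (c / 2^n) = sinh c`, and `2^n sinh (c / 2^n) → c`
because `sinh' 0 = 1`. The infinite product converges since `log cosh y ≤ y² / 2`.
-/

open Filter Topology Finset Real

lemma prod_cosh_div_two_pow_mul_sinh (c : ℝ) (n : ℕ) :
    (∏ j ∈ range n, cosh (c / 2 ^ (j + 1))) * (2 ^ n * sinh (c / 2 ^ n)) = sinh c := by
  induction n with
  | zero => simp
  | succ n ih =>
    have double : sinh (c / 2 ^ n) = 2 * sinh (c / 2 ^ (n + 1)) * cosh (c / 2 ^ (n + 1)) := by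
      rw [← sinh_two_mul]
      congr 1
      field_simp
      ring
    rw [prod_range_succ, ← ih, double]
    ring

lemma tendsto_two_pow_mul_sinh_div_two_pow (c : ℝ) :
    Tendsto (fun n : ℕ => 2 ^ n * sinh (c / 2 ^ n)) atTop (𝓝 c) := by
  have deriv : HasDerivAt (fun y => sinh (c * y)) c 0 := by
    simpa using ((hasDerivAt_id (0 : ℝ)).const_mul c).sinh
  have halves : Tendsto (fun n : ℕ => (2 ^ n : ℝ)⁻¹) atTop (𝓝[≠] 0) :=
    tendsto_nhdsWithin_mono_right (fun _ => ne_of_gt)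
      (tendsto_inv_atTop_nhdsGT_zero.comp (tendsto_pow_atTop_atTop_of_one_lt one_lt_two))
  refine ((hasDerivAt_iff_tendsto_slope.mp deriv).comp halves).congr fun n => ?_
  simp [slope_def_field, div_eq_mul_inv, mul_comm]

lemma multipliable_cosh_div_two_pow (c : ℝ) :
    Multipliable fun j : ℕ => cosh (c / 2 ^ (j + 1)) := by
  have summable_sq : Summable fun j : ℕ => (c / 2 ^ (j + 1)) ^ 2 / 2 := by
    refine ((summable_geometric_of_lt_one (by norm_num : (0 : ℝ) ≤ 4⁻¹) (by norm_num)).mul_left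
      (c ^ 2 / 8)).congr fun j => ?_
    rw [div_pow, ← pow_mul, add_mul, pow_add, mul_comm j, pow_mul, inv_pow]
    norm_num
    ring
  refine multipliable_of_summable_log (fun j => cosh_pos _) (summable_sq.of_nonneg_of_le
    (fun j => log_nonneg (one_le_cosh _)) fun j => ?_)
  exact (log_le_log (cosh_pos _) (cosh_le_exp_half_sq _)).trans_eq (log_exp _)

lemma hasProd_cosh_div_two_pow {c : ℝ} (hc : c ≠ 0) :
    HasProd (fun j : ℕ => cosh (c / 2 ^ (j + 1))) (sinh c / c) := by
  refine (multipliable_cosh_div_two_pow c).hasProd_iff_tendsto_nat.mpr ?_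
  refine (tendsto_const_nhds.div (tendsto_two_pow_mul_sinh_div_two_pow c) hc).congr fun n => ?_
  have sinh_ne : sinh (c / 2 ^ n) ≠ 0 := sinh_ne_zero.mpr (div_ne_zero hc (by positivity))
  rw [Pi.div_apply, div_eq_iff (mul_ne_zero (by positivity) sinh_ne), prod_cosh_div_two_pow_mul_sinh]

theorem cosh_product (x : ℝ) :
    ∏' j : ℕ, Real.cosh (Real.pi * x / 2 ^ (j + 1))
      = if x = 0 then 1 else Real.sinh (Real.pi * x) / (Real.pi * x) := by
  split_ifs with hx
  · simp [hx]
  · exact (hasProd_cosh_div_two_pow (mul_ne_zero pi_ne_zero hx)).tprod_eq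
end

section
/- For every real q with 0 < q < 1, ∑_{j≥0} 2^{j+1} / (q^{−2^{j+1}} + 1) = 2 q² / (1 − q²). -/
/-!
With `t = q ^ 2 ^ n` one has `1 / (1 / t + 1) = t / (1 - t) - 2 t² / (1 - t²)`, so the `n`-th term
is `tail q n - tail q (n + 1)` with `tail q n = 2 ^ n q ^ 2 ^ n / (1 - q ^ 2 ^ n)`. The series
telescopes to `tail q 1 = 2 q² / (1 - q²)`, because `tail q n → 0` (`2 ^ n q ^ 2 ^ n` is a
subsequence of `m q ^ m → 0`).
-/

open Filter Finset Topology

theorem hasSum_sub_succ_of_tendsto_s19 {f : ℕ → ℝ} {l : ℝ} (hanti : ∀ n, f (n + 1) ≤ f n)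
    (hf : Tendsto f atTop (𝓝 l)) : HasSum (fun n => f n - f (n + 1)) (f 0 - l) := by
  rw [hasSum_iff_tendsto_nat_of_nonneg fun n => sub_nonneg.2 (hanti n)]
  simp_rw [sum_range_sub']
  exact tendsto_const_nhds.sub hf

theorem div_one_div_add_one_eq_sub {K : Type*} [Field K] (c : K) {t : K} (ht : t ≠ 0)
    (ht2 : t ^ 2 ≠ 1) : c / (1 / t + 1) = c * t / (1 - t) - 2 * c * t ^ 2 / (1 - t ^ 2) := by
  have h1 : 1 - t ≠ 0 := fun h => ht2 (by rw [← sub_eq_zero.1 h]; ring)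
  have h2 : 1 + t ≠ 0 := fun h => ht2 (by rw [eq_neg_of_add_eq_zero_right h]; ring)
  have h3 : 1 - t ^ 2 ≠ 0 := sub_ne_zero.2 (Ne.symm ht2)
  field_simp
  ring

namespace DyadicSeries

noncomputable def tail (q : ℝ) (n : ℕ) : ℝ := 2 ^ n * q ^ 2 ^ n / (1 - q ^ 2 ^ n)

variable {q : ℝ}

theorem term_eq_tail_sub_tail (h0 : 0 < q) (h1 : q < 1) (n : ℕ) :
    (2 : ℝ) ^ n / ((1 / q) ^ 2 ^ n + 1) = tail q n - tail q (n + 1) := by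
  have ht : q ^ 2 ^ n < 1 := pow_lt_one₀ h0.le h1 (by positivity)
  rw [one_div_pow, div_one_div_add_one_eq_sub _ (by positivity) (by nlinarith [pow_pos h0 (2 ^ n)])]
  simp only [tail, pow_succ, pow_mul]
  ring

theorem tail_succ_le (h0 : 0 < q) (h1 : q < 1) (n : ℕ) : tail q (n + 1) ≤ tail q n := by
  rw [← sub_nonneg, ← term_eq_tail_sub_tail h0 h1]
  positivity

theorem tendsto_tail_zero (h0 : 0 < q) (h1 : q < 1) : Tendsto (tail q) atTop (𝓝 0) := by
  have hpow : Tendsto (fun n : ℕ => 2 ^ n) atTop atTop :=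
    tendsto_pow_atTop_atTop_of_one_lt one_lt_two
  have hnum : Tendsto (fun n : ℕ => (2 : ℝ) ^ n * q ^ 2 ^ n) atTop (𝓝 0) := by
    simpa [Function.comp_def] using (tendsto_self_mul_const_pow_of_lt_one h0.le h1).comp hpow
  have hden : Tendsto (fun n : ℕ => 1 - q ^ 2 ^ n) atTop (𝓝 1) := by
    simpa using tendsto_const_nhds.sub
      ((tendsto_pow_atTop_nhds_zero_of_lt_one h0.le h1).comp hpow)
  rw [← zero_div 1]
  exact hnum.div hden one_ne_zero

theorem tail_one : tail q 1 = 2 * q ^ 2 / (1 - q ^ 2) := by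
  simp [tail]

end DyadicSeries

open DyadicSeries in
theorem sum_pow_two_over_inv_q (q : ℝ) (h0 : 0 < q) (h1 : q < 1) :
    ∑' j : ℕ, (2 : ℝ) ^ (j + 1) / ((1 / q) ^ (2 ^ (j + 1)) + 1)
      = 2 * q ^ 2 / (1 - q ^ 2) := by
  have hsum := hasSum_sub_succ_of_tendsto_s19 (fun n => tail_succ_le h0 h1 (n + 1))
    ((tendsto_tail_zero h0 h1).comp (tendsto_add_atTop_nat 1))
  simp only [Function.comp_apply, zero_add, sub_zero, ← term_eq_tail_sub_tail h0 h1] at hsum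
  rw [hsum.tsum_eq, tail_one]
end
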